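/- arXiv:0903.2105 — 4 statements merged into one kernel-verified Lean document; each statement's English description precedes it below -/
import Mathlib

section
/- For every function φ in the Sobolev space H¹(Ω₁) with Ω₁ = [0,1]^{d-1} × [0,L], one has (2/L)‖Γφ‖²_{L²(S)} + ‖∇φ‖²_{L²(Ω₁)} ≥ (1/L²)‖φ‖²_{L²(Ω₁)}, where Γ is the trace operator onto the face S = [0,1]^{d-1} × {0}. -/
/-!
On each vertical fibre `t ↦ f t = φ (x', t)` use a Riccati weight `w` with `w' ≥ w² + 1/L²` on
`[0, L]`, `w L = 0` and `w 0 = -2/L`. Then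
`f'² + (w f²)' - f²/L² = (f' + w f)² + (w' - w² - 1/L²) f² ≥ 0`,
and integrating over `[0, L]` gives `(1/L²)∫f² ≤ (2/L) f(0)² + ∫f'²`. Bounding `f'²` by the full
squared gradient and integrating over the cube gives the inequality on the strip.
-/

open MeasureTheory Set

/-- Squared Euclidean norm of the full gradient of `φ : ℝ^{d-1} × ℝ → ℝ`. -/
noncomputable def gradSq {n : ℕ} (φ : (Fin n → ℝ) × ℝ → ℝ) (p : (Fin n → ℝ) × ℝ) : ℝ :=
  (∑ i : Fin n, (fderiv ℝ φ p (Pi.single i 1, 0)) ^ 2) + (fderiv ℝ φ p (0, 1)) ^ 2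

theorem integral_sq_le_of_riccati {a b c : ℝ} (hab : a ≤ b) {f f' w w' : ℝ → ℝ}
    (hf : ∀ t ∈ Icc a b, HasDerivAt f (f' t) t) (hf' : ContinuousOn f' (Icc a b))
    (hw : ∀ t ∈ Icc a b, HasDerivAt w (w' t) t) (hw' : ContinuousOn w' (Icc a b))
    (hric : ∀ t ∈ Icc a b, w t ^ 2 + c ≤ w' t) :
    c * ∫ t in a..b, f t ^ 2 ≤ (∫ t in a..b, f' t ^ 2) + w b * f b ^ 2 - w a * f a ^ 2 := by
  have hfc : ContinuousOn f (Icc a b) := HasDerivAt.continuousOn hf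
  have hwc : ContinuousOn w (Icc a b) := HasDerivAt.continuousOn hw
  have integrable {g : ℝ → ℝ} (hg : ContinuousOn g (Icc a b)) :
      IntervalIntegrable g volume a b :=
    hg.intervalIntegrable_of_Icc hab
  set H' : ℝ → ℝ := fun t => w' t * f t ^ 2 + w t * (2 * f t * f' t)
  have hH : ∀ t ∈ uIcc a b, HasDerivAt (fun t => w t * f t ^ 2) (H' t) t := by
    intro t ht
    rw [uIcc_of_le hab] at ht
    refine ((hw t ht).fun_mul ((hf t ht).fun_pow 2)).congr_deriv ?_
    simp only [H']
    ring
  have hH'int : IntervalIntegrable H' volume a b :=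
    integrable ((hw'.mul (hfc.pow 2)).add (hwc.mul ((continuousOn_const.mul hfc).mul hf')))
  have hf'int : IntervalIntegrable (fun t => f' t ^ 2) volume a b := integrable (hf'.pow 2)
  have hpointwise : ∀ t ∈ Icc a b, c * f t ^ 2 ≤ f' t ^ 2 + H' t := by
    intro t ht
    nlinarith [sq_nonneg (f' t + w t * f t),
      mul_nonneg (sub_nonneg.2 (hric t ht)) (sq_nonneg (f t))]
  calc c * ∫ t in a..b, f t ^ 2 = ∫ t in a..b, c * f t ^ 2 :=
        (intervalIntegral.integral_const_mul _ _).symm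
    _ ≤ ∫ t in a..b, (f' t ^ 2 + H' t) :=
      intervalIntegral.integral_mono_on hab (integrable (continuousOn_const.mul (hfc.pow 2)))
        (hf'int.add hH'int) hpointwise
    _ = _ := by
      rw [intervalIntegral.integral_add hf'int hH'int,
        intervalIntegral.integral_eq_sub_of_hasDerivAt hH hH'int]
      ring

/-- `traceWeight L = -D'/D` for the quadratic `D t = 2L² - (t - L)²`, so it solves the Riccati
equation `w' = w² + 2/D`, and `2/D ≥ 1/L²` on `[0, L]`. -/
noncomputable def traceWeight (L t : ℝ) : ℝ := 2 * (t - L) / (2 * L ^ 2 - (t - L) ^ 2)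

theorem hasDerivAt_traceWeight {L t : ℝ} (h : 2 * L ^ 2 - (t - L) ^ 2 ≠ 0) :
    HasDerivAt (traceWeight L) (traceWeight L t ^ 2 + 2 / (2 * L ^ 2 - (t - L) ^ 2)) t := by
  have hnum : HasDerivAt (fun s => 2 * (s - L)) 2 t := by
    simpa using ((hasDerivAt_id t).sub_const L).const_mul 2
  have hden : HasDerivAt (fun s => 2 * L ^ 2 - (s - L) ^ 2) (-(2 * (t - L))) t := by
    simpa using (((hasDerivAt_id t).sub_const L).pow 2).const_sub (2 * L ^ 2)
  refine (hnum.div hden h).congr_deriv ?_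
  unfold traceWeight
  field_simp
  ring

theorem trace_poincare_interval {L : ℝ} (hL : 0 < L) {f f' : ℝ → ℝ}
    (hf : ∀ t ∈ Icc 0 L, HasDerivAt f (f' t) t) (hf' : ContinuousOn f' (Icc 0 L)) :
    (1 / L ^ 2) * ∫ t in 0..L, f t ^ 2 ≤ (2 / L) * f 0 ^ 2 + ∫ t in 0..L, f' t ^ 2 := by
  set D : ℝ → ℝ := fun t => 2 * L ^ 2 - (t - L) ^ 2
  have hD : ∀ t ∈ Icc 0 L, 0 < D t ∧ D t ≤ 2 * L ^ 2 := fun t ht =>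
    ⟨by nlinarith [ht.1, ht.2], by nlinarith [sq_nonneg (t - L)]⟩
  have hw : ∀ t ∈ Icc 0 L, HasDerivAt (traceWeight L) (traceWeight L t ^ 2 + 2 / D t) t :=
    fun t ht => hasDerivAt_traceWeight (hD t ht).1.ne'
  have hw' : ContinuousOn (fun t => traceWeight L t ^ 2 + 2 / D t) (Icc 0 L) :=
    ((HasDerivAt.continuousOn hw).pow 2).add
      (continuousOn_const.div (by fun_prop) fun t ht => (hD t ht).1.ne')
  have hric :
      ∀ t ∈ Icc 0 L, traceWeight L t ^ 2 + 1 / L ^ 2 ≤ traceWeight L t ^ 2 + 2 / D t := by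
    intro t ht
    rw [add_le_add_iff_left, div_le_div_iff₀ (by positivity) (hD t ht).1]
    linarith [(hD t ht).2]
  have hwL : traceWeight L L = 0 := by simp [traceWeight]
  have hw0 : traceWeight L 0 = -(2 / L) := by
    rw [traceWeight, show 2 * L ^ 2 - (0 - L) ^ 2 = L ^ 2 by ring]
    field_simp
    ring
  have := integral_sq_le_of_riccati hL.le hf hf' hw hw' hric
  rwa [hwL, hw0, zero_mul, add_zero, neg_mul, sub_neg_eq_add, add_comm] at this

theorem DifferentiableAt.hasDerivAt_comp_prodMk_right {E F : Type*} [NormedAddCommGroup E]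
    [NormedSpace ℝ E] [NormedAddCommGroup F] [NormedSpace ℝ F] {φ : E × ℝ → F} {x : E} {t : ℝ}
    (hφ : DifferentiableAt ℝ φ (x, t)) :
    HasDerivAt (fun s => φ (x, s)) (fderiv ℝ φ (x, t) (0, 1)) t :=
  hφ.hasFDerivAt.comp_hasDerivAt t ((hasDerivAt_const t x).prodMk (hasDerivAt_id t))

section gradSq

variable {n : ℕ} {φ : (Fin n → ℝ) × ℝ → ℝ}

theorem sq_fderiv_apply_snd_le_gradSq (p : (Fin n → ℝ) × ℝ) :
    fderiv ℝ φ p (0, 1) ^ 2 ≤ gradSq φ p :=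
  le_add_of_nonneg_left (Finset.sum_nonneg fun _ _ => sq_nonneg _)

theorem continuous_gradSq (hφ : ContDiff ℝ 1 φ) : Continuous (gradSq φ) := by
  have h := hφ.continuous_fderiv one_ne_zero
  unfold gradSq
  fun_prop

theorem trace_poincare_fiber {L : ℝ} (hL : 0 < L) (hφ : ContDiff ℝ 1 φ) (x : Fin n → ℝ) :
    (1 / L ^ 2) * ∫ t in 0..L, φ (x, t) ^ 2
      ≤ (2 / L) * φ (x, 0) ^ 2 + ∫ t in 0..L, gradSq φ (x, t) := by
  have hφ' := hφ.continuous_fderiv one_ne_zero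
  have hderiv : ∀ t ∈ Icc 0 L, HasDerivAt (fun s => φ (x, s)) (fderiv ℝ φ (x, t) (0, 1)) t :=
    fun t _ => (hφ.differentiable one_ne_zero _).hasDerivAt_comp_prodMk_right
  refine (trace_poincare_interval hL hderiv (by fun_prop)).trans (add_le_add_right ?_ _)
  have hg := continuous_gradSq hφ
  exact intervalIntegral.integral_mono_on hL.le (Continuous.intervalIntegrable (by fun_prop) _ _)
    (Continuous.intervalIntegrable (by fun_prop) _ _) fun t _ => sq_fderiv_apply_snd_le_gradSq _

end gradSq

/-- Trace–Poincaré inequality on the strip `Ω₁ = [0,1]^{d-1} × [0,L]`: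
`(2/L)‖Γφ‖²_{L²(S)} + ‖∇φ‖²_{L²(Ω₁)} ≥ (1/L²)‖φ‖²_{L²(Ω₁)}`. -/
theorem trace_poincare_strip {n : ℕ} (L : ℝ) (hL : 0 < L)
    (φ : (Fin n → ℝ) × ℝ → ℝ) (hφ : ContDiff ℝ 1 φ) :
    (1 / L ^ 2) * (∫ x' in Set.Icc (0 : Fin n → ℝ) 1, ∫ t in (0 : ℝ)..L, (φ (x', t)) ^ 2)
      ≤ (2 / L) * (∫ x' in Set.Icc (0 : Fin n → ℝ) 1, (φ (x', 0)) ^ 2)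
        + ∫ x' in Set.Icc (0 : Fin n → ℝ) 1, ∫ t in (0 : ℝ)..L, gradSq φ (x', t) := by
  have hφc := hφ.continuous
  have hg := continuous_gradSq hφ
  have hbulk : IntegrableOn (fun x' => ∫ t in 0..L, φ (x', t) ^ 2) (Icc 0 1) :=
    (intervalIntegral.continuous_parametric_intervalIntegral_of_continuous'
      (f := fun x' t => φ (x', t) ^ 2) (by fun_prop) 0 L).integrableOn_Icc
  have hface : IntegrableOn (fun x' => φ (x', 0) ^ 2) (Icc 0 1) :=
    (by fun_prop : Continuous fun x' => φ (x', 0) ^ 2).integrableOn_Icc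
  have hgrad : IntegrableOn (fun x' => ∫ t in 0..L, gradSq φ (x', t)) (Icc 0 1) :=
    (intervalIntegral.continuous_parametric_intervalIntegral_of_continuous'
      (f := fun x' t => gradSq φ (x', t)) (by fun_prop) 0 L).integrableOn_Icc
  calc (1 / L ^ 2) * (∫ x' in Icc 0 1, ∫ t in 0..L, φ (x', t) ^ 2)
      = ∫ x' in Icc 0 1, (1 / L ^ 2) * ∫ t in 0..L, φ (x', t) ^ 2 :=
        (integral_const_mul _ _).symm
    _ ≤ ∫ x' in Icc 0 1, ((2 / L) * φ (x', 0) ^ 2 + ∫ t in 0..L, gradSq φ (x', t)) :=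
        setIntegral_mono_on (hbulk.const_mul _) ((hface.const_mul _).fun_add hgrad)
          measurableSet_Icc fun x' _ => trace_poincare_fiber hL hφ x'
    _ = _ := by rw [integral_add (hface.const_mul _) hgrad, integral_const_mul]
end

section
/- If Ψ is the strictly positive ground state of the Neumann operator H^N = −Δ + v on the unit cube C₁(0) with ground state energy 0, then there is a constant c₁ = (inf Ψ)^{-2} > 0 such that for all φ ∈ H¹(C₁(0)): ‖∇(φ/Ψ)‖²_{L²(C₁(0))} ≤ c₁ q(φ,φ), where q(φ,φ) = ∫ (|∇φ|² + v|φ|²). -/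
open MeasureTheory

noncomputable def pd {d : ℕ} (i : Fin d) (φ : (Fin d → ℝ) → ℝ) (x : Fin d → ℝ) : ℝ :=
  fderiv ℝ φ x (Pi.single i 1)

noncomputable def gradSqd {d : ℕ} (φ : (Fin d → ℝ) → ℝ) (x : Fin d → ℝ) : ℝ :=
  ∑ i : Fin d, (pd i φ x) ^ 2

/-- The quadratic form `q(f,g) = ∫_Ω (∇f·∇g + v f g)` of `−Δ + v` on `Ω`. -/
noncomputable def qform {d : ℕ} (Ω : Set (Fin d → ℝ)) (v f g : (Fin d → ℝ) → ℝ) : ℝ :=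
  ∫ x in Ω, ((∑ i : Fin d, pd i f x * pd i g x) + v x * f x * g x)

/-!
Ground state substitution: writing `φ = Ψ · (φ / Ψ)` one has pointwise
`|∇φ|² + v φ² = Ψ² |∇(φ/Ψ)|² + ∇(φ²/Ψ)·∇Ψ + v (φ²/Ψ) Ψ`, and the last two terms integrate to
`q(φ²/Ψ, Ψ) = 0`. Hence `q(φ,φ) = ∫ Ψ² |∇(φ/Ψ)|² ≥ (inf Ψ)² ‖∇(φ/Ψ)‖²`. As `Ψ` is positive only
on the cube, the test function is `φ² · g(Ψ)` for a `C¹` function `g` on `ℝ` that agrees with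
`t⁻¹` on `[inf Ψ, ∞)`.
-/

open Set

lemma IsCompact.sInf_image_pos {α : Type*} [TopologicalSpace α] {K : Set α} {f : α → ℝ}
    (hK : IsCompact K) (hne : K.Nonempty) (hf : ContinuousOn f K) (hpos : ∀ x ∈ K, 0 < f x) :
    0 < sInf (f '' K) := by
  obtain ⟨x, hx, hfx⟩ := (hK.image_of_continuousOn hf).sInf_mem (hne.image f)
  exact hfx ▸ hpos x hx

/-- `t⁻¹` on `[c, ∞)`, continued below `c` by its tangent line at `c`. -/
noncomputable def invTangentExt (c t : ℝ) : ℝ := (2 * max t c - t) / max t c ^ 2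

section invTangentExt

variable {c : ℝ}

lemma invTangentExt_of_le (hc : 0 < c) {t : ℝ} (h : c ≤ t) : invTangentExt c t = t⁻¹ := by
  have ht : t ≠ 0 := (hc.trans_le h).ne'
  rw [invTangentExt, max_eq_left h]
  field_simp
  ring

lemma invTangentExt_of_ge {t : ℝ} (h : t ≤ c) : invTangentExt c t = (2 * c - t) / c ^ 2 := by
  rw [invTangentExt, max_eq_right h]

lemma hasDerivAt_invTangentExt (hc : 0 < c) (t : ℝ) :
    HasDerivAt (invTangentExt c) (-(max t c ^ 2)⁻¹) t := by
  have hline : ∀ s, HasDerivAt (fun t : ℝ => (2 * c - t) / c ^ 2) (-(c ^ 2)⁻¹) s := fun s => by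
    simpa [neg_div] using ((hasDerivAt_id s).const_sub (2 * c)).div_const (c ^ 2)
  rcases lt_trichotomy t c with h | rfl | h
  · rw [max_eq_right h.le]
    exact (hline t).congr_of_eventuallyEq <|
      (eventually_lt_nhds h).mono fun s hs => invTangentExt_of_ge hs.le
  · have hleft : HasDerivWithinAt (invTangentExt t) (-(max t t ^ 2)⁻¹) (Iic t) t := by
      rw [max_self]
      exact (hline t).hasDerivWithinAt.congr (fun s hs => invTangentExt_of_ge hs)
        (invTangentExt_of_ge le_rfl)
    have hright : HasDerivWithinAt (invTangentExt t) (-(max t t ^ 2)⁻¹) (Ici t) t := by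
      rw [max_self]
      exact (hasDerivAt_inv hc.ne').hasDerivWithinAt.congr
        (fun s hs => invTangentExt_of_le hc hs) (invTangentExt_of_le hc le_rfl)
    simpa [Iic_union_Ici] using hleft.union hright
  · rw [max_eq_left h.le]
    exact (hasDerivAt_inv (hc.trans h).ne').congr_of_eventuallyEq <|
      (eventually_gt_nhds h).mono fun s hs => invTangentExt_of_le hc hs.le

lemma contDiff_invTangentExt (hc : 0 < c) : ContDiff ℝ 1 (invTangentExt c) := by
  rw [contDiff_one_iff_deriv]
  refine ⟨fun t => (hasDerivAt_invTangentExt hc t).differentiableAt, ?_⟩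
  rw [funext fun t => (hasDerivAt_invTangentExt hc t).deriv]
  exact ((continuous_id.max continuous_const).pow 2).inv₀
    (fun t => (pow_pos (hc.trans_le (le_max_right t c)) 2).ne') |>.neg

lemma contDiff_mul_self_mul_invTangentExt {d : ℕ} {φ Ψ : (Fin d → ℝ) → ℝ} (hc : 0 < c)
    (hφ : ContDiff ℝ 1 φ) (hΨ : ContDiff ℝ 1 Ψ) :
    ContDiff ℝ 1 fun y => φ y * φ y * invTangentExt c (Ψ y) :=
  (hφ.mul hφ).mul ((contDiff_invTangentExt hc).comp hΨ)

end invTangentExt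

section partialDerivatives

variable {d : ℕ} {i : Fin d} {f φ Ψ : (Fin d → ℝ) → ℝ} {x : Fin d → ℝ}

lemma HasFDerivAt.pd_eq {f' : (Fin d → ℝ) →L[ℝ] ℝ} (h : HasFDerivAt f f' x) :
    pd i f x = f' (Pi.single i 1) := by
  rw [pd, h.fderiv]

lemma ContDiff.continuous_pd (hf : ContDiff ℝ 1 f) : Continuous (pd i f) :=
  (hf.continuous_fderiv one_ne_zero).clm_apply continuous_const

lemma gradSqd_nonneg (f : (Fin d → ℝ) → ℝ) (x : Fin d → ℝ) : 0 ≤ gradSqd f x :=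
  Finset.sum_nonneg fun _ _ => sq_nonneg _

lemma pd_div (hφ : DifferentiableAt ℝ φ x) (hΨ : DifferentiableAt ℝ Ψ x) (hx : Ψ x ≠ 0) :
    pd i (fun y => φ y / Ψ y) x = pd i φ x / Ψ x - φ x * pd i Ψ x / Ψ x ^ 2 := by
  have h : HasFDerivAt (fun y => φ y * (Ψ y)⁻¹) _ x :=
    hφ.hasFDerivAt.mul ((hasDerivAt_inv hx).comp_hasFDerivAt x hΨ.hasFDerivAt)
  simp only [div_eq_mul_inv] at h ⊢
  rw [h.pd_eq, pd, pd]
  simp only [add_apply, smul_apply, smul_eq_mul]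
  ring

lemma pd_mul_self_mul_comp {g : ℝ → ℝ} {g' : ℝ} (hφ : DifferentiableAt ℝ φ x)
    (hΨ : DifferentiableAt ℝ Ψ x) (hg : HasDerivAt g g' (Ψ x)) :
    pd i (fun y => φ y * φ y * g (Ψ y)) x
      = 2 * φ x * g (Ψ x) * pd i φ x + φ x ^ 2 * g' * pd i Ψ x := by
  have h : HasFDerivAt (fun y => φ y * φ y * g (Ψ y)) _ x :=
    (hφ.hasFDerivAt.mul hφ.hasFDerivAt).mul (hg.comp_hasFDerivAt x hΨ.hasFDerivAt)
  rw [h.pd_eq, pd, pd]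
  simp only [add_apply, smul_apply, smul_eq_mul, Pi.mul_apply]
  ring

end partialDerivatives

noncomputable def qformDensity {d : ℕ} (v f g : (Fin d → ℝ) → ℝ) (x : Fin d → ℝ) : ℝ :=
  (∑ i : Fin d, pd i f x * pd i g x) + v x * f x * g x

section groundStateSubstitution

variable {d : ℕ} {v φ Ψ : (Fin d → ℝ) → ℝ} {c : ℝ}

lemma continuous_qformDensity {f g : (Fin d → ℝ) → ℝ} (hv : Continuous v)
    (hf : ContDiff ℝ 1 f) (hg : ContDiff ℝ 1 g) : Continuous (qformDensity v f g) :=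
  (continuous_finsetSum _ fun _ _ => hf.continuous_pd.mul hg.continuous_pd).add
    ((hv.mul hf.continuous).mul hg.continuous)

lemma qformDensity_self_eq {x : Fin d → ℝ} (hφ : DifferentiableAt ℝ φ x)
    (hΨ : DifferentiableAt ℝ Ψ x) (hc : 0 < c) (hx : c ≤ Ψ x) :
    qformDensity v φ φ x = Ψ x ^ 2 * gradSqd (fun y => φ y / Ψ y) x
      + qformDensity v (fun y => φ y * φ y * invTangentExt c (Ψ y)) Ψ x := by
  have hΨx : Ψ x ≠ 0 := (hc.trans_le hx).ne'
  have hderiv := hasDerivAt_invTangentExt hc (Ψ x)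
  rw [max_eq_left hx] at hderiv
  simp only [qformDensity, gradSqd, pd_div hφ hΨ hΨx, pd_mul_self_mul_comp hφ hΨ hderiv,
    invTangentExt_of_le hc hx, Finset.mul_sum, ← add_assoc, ← Finset.sum_add_distrib]
  congr 1
  · exact Finset.sum_congr rfl fun i _ => by field_simp; ring
  · field_simp

lemma integrableOn_sq_mul_gradSqd_div_and_setIntegral_eq {Ω : Set (Fin d → ℝ)}
    (hΩ : IsCompact Ω) (hv : Continuous v) (hφ : ContDiff ℝ 1 φ) (hΨ : ContDiff ℝ 1 Ψ)
    (hc : 0 < c) (hΨc : ∀ x ∈ Ω, c ≤ Ψ x) :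
    IntegrableOn (fun x => Ψ x ^ 2 * gradSqd (fun y => φ y / Ψ y) x) Ω ∧
      ∫ x in Ω, Ψ x ^ 2 * gradSqd (fun y => φ y / Ψ y) x
        = qform Ω v φ φ - qform Ω v (fun y => φ y * φ y * invTangentExt c (Ψ y)) Ψ := by
  have hsplit : EqOn (fun x => Ψ x ^ 2 * gradSqd (fun y => φ y / Ψ y) x)
      (fun x => qformDensity v φ φ x
        - qformDensity v (fun y => φ y * φ y * invTangentExt c (Ψ y)) Ψ x) Ω := fun x hx =>
    eq_sub_of_add_eq (qformDensity_self_eq (hφ.differentiable one_ne_zero x)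
      (hΨ.differentiable one_ne_zero x) hc (hΨc x hx)).symm
  have hφi : IntegrableOn (qformDensity v φ φ) Ω :=
    (continuous_qformDensity hv hφ hφ).continuousOn.integrableOn_compact hΩ
  have hψi : IntegrableOn (qformDensity v (fun y => φ y * φ y * invTangentExt c (Ψ y)) Ψ) Ω :=
    (continuous_qformDensity hv (contDiff_mul_self_mul_invTangentExt hc hφ hΨ)
      hΨ).continuousOn.integrableOn_compact hΩ
  refine ⟨(hφi.sub hψi).congr_fun hsplit.symm hΩ.measurableSet, ?_⟩
  rw [setIntegral_congr_fun hΩ.measurableSet hsplit, integral_sub hφi hψi]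
  rfl

end groundStateSubstitution

/-- If `Ψ` is the strictly positive ground state of the Neumann operator `−Δ + v` on the
unit cube with ground state energy `0` (so that `q(ψ,Ψ) = 0` for all test functions `ψ`),
then with `m = inf Ψ > 0` one has `‖∇(φ/Ψ)‖² ≤ m⁻² q(φ,φ)` for all `φ`. -/
theorem gradient_bound_by_form {d : ℕ} (v Ψ : (Fin d → ℝ) → ℝ) (hv : Continuous v)
    (hΨ : ContDiff ℝ 2 Ψ)
    (hΨpos : ∀ x ∈ Set.Icc (0 : Fin d → ℝ) 1, 0 < Ψ x)
    (hgs : ∀ ψ : (Fin d → ℝ) → ℝ, ContDiff ℝ 1 ψ →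
      qform (Set.Icc (0 : Fin d → ℝ) 1) v ψ Ψ = 0) :
    0 < sInf (Ψ '' Set.Icc (0 : Fin d → ℝ) 1) ∧
    ∀ φ : (Fin d → ℝ) → ℝ, ContDiff ℝ 1 φ →
      (∫ x in Set.Icc (0 : Fin d → ℝ) 1, gradSqd (fun y => φ y / Ψ y) x)
        ≤ ((sInf (Ψ '' Set.Icc (0 : Fin d → ℝ) 1)) ^ 2)⁻¹ *
            qform (Set.Icc (0 : Fin d → ℝ) 1) v φ φ := by
  set K : Set (Fin d → ℝ) := Icc 0 1
  set m := sInf (Ψ '' K)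
  have hΨ₁ : ContDiff ℝ 1 Ψ := hΨ.of_le one_le_two
  have hm : 0 < m := isCompact_Icc.sInf_image_pos (nonempty_Icc.2 zero_le_one)
    hΨ.continuous.continuousOn hΨpos
  have hmΨ : ∀ x ∈ K, m ≤ Ψ x := fun x hx =>
    csInf_le (isCompact_Icc.image hΨ.continuous).bddBelow (mem_image_of_mem Ψ hx)
  refine ⟨hm, fun φ hφ => ?_⟩
  obtain ⟨hint, hrepr⟩ :=
    integrableOn_sq_mul_gradSqd_div_and_setIntegral_eq isCompact_Icc hv hφ hΨ₁ hm hmΨ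
  rw [hgs _ (contDiff_mul_self_mul_invTangentExt hm hφ hΨ₁), sub_zero] at hrepr
  calc ∫ x in K, gradSqd (fun y => φ y / Ψ y) x
      ≤ ∫ x in K, (m ^ 2)⁻¹ * (Ψ x ^ 2 * gradSqd (fun y => φ y / Ψ y) x) := by
        refine integral_mono_of_nonneg (.of_forall fun x => ?_) (hint.const_mul _) ?_
        · exact gradSqd_nonneg _ x
        refine (ae_restrict_mem measurableSet_Icc).mono fun x hx =>
          (le_inv_mul_iff₀ (by positivity)).2 ?_
        exact mul_le_mul_of_nonneg_right (pow_le_pow_left₀ hm.le (hmΨ x hx) 2)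
          (gradSqd_nonneg _ x)
    _ = (m ^ 2)⁻¹ * qform K v φ φ := by rw [integral_const_mul, hrepr]
end

section
/- Let H₁, H₂ be Neumann realizations of −Δ + v₁ and −Δ + v₂ on the unit cube C₁(0), both with ground state energy 0 and positive ground states Ψ₁, Ψ₂. Let H₁₂ be the Neumann realization on U = C₁(0) ∪ C₁(e_d) of the operator equal to −Δ + v₁ on C₁(0) and −Δ + v₂(· − e_d) on C₁(e_d). If inf σ(H₁₂) = 0 and v₁, v₂ are symmetric about the hyperplane {x_d = 1/2}, then there exist μ₁, μ₂ > 0 with μ₁Ψ₁(x',0) = μ₂Ψ₂(x',0) for all x' ∈ [0,1]^{d-1}. -/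
open MeasureTheory

/-- Reflection about the hyperplane `{x_d = 1/2}`. -/
noncomputable def reflectLast {n : ℕ} (x : Fin (n + 1) → ℝ) : Fin (n + 1) → ℝ :=
  Function.update x (Fin.last n) (1 - x (Fin.last n))

/-!
By uniqueness of the ground states, `Φ = μ₁ Ψ₁` on the lower cube and `Φ(· + e_d) = μ₂ Ψ₂` on
the unit cube. The Neumann form on the cube is invariant under the reflection
`R : x_d ↦ 1 - x_d` when the potential is, so `Ψ₁ ∘ R` is again a positive zero-energy state,
hence a multiple of `Ψ₁`; evaluating at the centre of the cube, which `R` fixes, shows that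
`Ψ₁ ∘ R = Ψ₁`. On the face `x_d = 0` we have `R x = x + e_d`, so
`μ₁ Ψ₁(x) = μ₁ Ψ₁(x + e_d) = Φ(x + e_d) = μ₂ Ψ₂(x)`.
-/

lemma reflectLast_apply {n : ℕ} (x : Fin (n + 1) → ℝ) (i : Fin (n + 1)) :
    reflectLast x i = if i = Fin.last n then 1 - x i else x i := by
  rcases eq_or_ne i (Fin.last n) with rfl | h
  · simp [reflectLast]
  · simp [reflectLast, h]

lemma reflectLast_involutive {n : ℕ} : Function.Involutive (reflectLast (n := n)) := by
  intro x
  ext i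
  simp only [reflectLast_apply]
  split_ifs <;> ring

lemma reflectLast_mem_Icc {n : ℕ} {x : Fin (n + 1) → ℝ}
    (hx : x ∈ Set.Icc (0 : Fin (n + 1) → ℝ) 1) :
    reflectLast x ∈ Set.Icc (0 : Fin (n + 1) → ℝ) 1 := by
  refine ⟨fun i => ?_, fun i => ?_⟩ <;>
  · have := hx.1 i; have := hx.2 i
    simp only [reflectLast_apply, Pi.zero_apply, Pi.one_apply] at *
    split_ifs <;> linarith

lemma reflectLast_preimage_Icc {n : ℕ} :
    reflectLast ⁻¹' Set.Icc (0 : Fin (n + 1) → ℝ) 1 = Set.Icc 0 1 :=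
  Set.Subset.antisymm (fun x hx => reflectLast_involutive x ▸ reflectLast_mem_Icc hx)
    fun _ => reflectLast_mem_Icc

lemma reflectLast_eq_add_single_of_last_eq_zero {n : ℕ} {x : Fin (n + 1) → ℝ}
    (hx : x (Fin.last n) = 0) : reflectLast x = x + Pi.single (Fin.last n) 1 := by
  ext i
  rw [reflectLast_apply, Pi.add_apply, Pi.single_apply]
  split_ifs with h
  · subst h; rw [hx]; ring
  · ring

lemma reflectLast_half {n : ℕ} :
    reflectLast (fun _ : Fin (n + 1) => (1 / 2 : ℝ)) = fun _ => 1 / 2 := by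
  ext i
  rw [reflectLast_apply]
  split_ifs <;> norm_num

lemma measurePreserving_reflectLast {n : ℕ} :
    MeasurePreserving (reflectLast (n := n)) volume volume := by
  have hcoord : ∀ i : Fin (n + 1),
      MeasurePreserving (fun t : ℝ => if i = Fin.last n then 1 - t else t) volume volume := by
    intro i
    split_ifs
    · exact Measure.measurePreserving_sub_left volume 1
    · exact MeasurePreserving.id volume
  rw [show reflectLast = fun x i => if i = Fin.last n then 1 - x i else x i from
    funext fun x => funext (reflectLast_apply x)]
  exact volume_preserving_pi hcoord

def negLast (n : ℕ) : (Fin (n + 1) → ℝ) ≃L[ℝ] (Fin (n + 1) → ℝ) :=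
  ContinuousLinearEquiv.piCongrRight fun i =>
    if i = Fin.last n then ContinuousLinearEquiv.neg ℝ else ContinuousLinearEquiv.refl ℝ ℝ

lemma negLast_apply {n : ℕ} (x : Fin (n + 1) → ℝ) (i : Fin (n + 1)) :
    negLast n x i = if i = Fin.last n then -x i else x i := by
  rw [negLast, ContinuousLinearEquiv.piCongrRight_apply]
  split_ifs <;> rfl

lemma reflectLast_eq_negLast_add (n : ℕ) :
    reflectLast = fun x => negLast n x + Pi.single (Fin.last n) 1 := by
  ext x i
  simp only [reflectLast_apply, Pi.add_apply, negLast_apply, Pi.single_apply]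
  split_ifs <;> ring

lemma contDiff_reflectLast {n : ℕ} : ContDiff ℝ 1 (reflectLast (n := n)) := by
  rw [reflectLast_eq_negLast_add]
  exact (negLast n).contDiff.add contDiff_const

lemma fderiv_comp_reflectLast {n : ℕ} (ψ : (Fin (n + 1) → ℝ) → ℝ) (x : Fin (n + 1) → ℝ) :
    fderiv ℝ (ψ ∘ reflectLast) x =
      (fderiv ℝ ψ (reflectLast x)).comp (negLast n : _ →L[ℝ] _) := by
  have h := (negLast n).comp_right_fderiv (f := fun y => ψ (y + Pi.single (Fin.last n) 1)) (x := x)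
  rw [fderiv_comp_add_right] at h
  rw [reflectLast_eq_negLast_add]
  exact h

lemma negLast_single {n : ℕ} (i : Fin (n + 1)) :
    negLast n (Pi.single i 1) = (if i = Fin.last n then -1 else 1 : ℝ) • Pi.single i 1 := by
  ext j
  rw [negLast_apply]
  rcases eq_or_ne j i with rfl | h
  · split_ifs <;> simp
  · simp [h]

lemma pd_comp_reflectLast {n : ℕ} (ψ : (Fin (n + 1) → ℝ) → ℝ) (i : Fin (n + 1))
    (x : Fin (n + 1) → ℝ) :
    pd i (ψ ∘ reflectLast) x = (if i = Fin.last n then -1 else 1) * pd i ψ (reflectLast x) := by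
  rw [pd, fderiv_comp_reflectLast, ContinuousLinearMap.comp_apply, ContinuousLinearEquiv.coe_coe,
    negLast_single, map_smul, smul_eq_mul, pd]

lemma qform_comp_reflectLast {n : ℕ} {s : Set (Fin (n + 1) → ℝ)} (hs : reflectLast ⁻¹' s = s)
    {v : (Fin (n + 1) → ℝ) → ℝ} (hv : ∀ x, v (reflectLast x) = v x)
    (f g : (Fin (n + 1) → ℝ) → ℝ) :
    qform s v (f ∘ reflectLast) (g ∘ reflectLast) = qform s v f g := by
  have hpt : ∀ x, (∑ i, pd i (f ∘ reflectLast) x * pd i (g ∘ reflectLast) x) +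
        v x * (f ∘ reflectLast) x * (g ∘ reflectLast) x =
      (∑ i, pd i f (reflectLast x) * pd i g (reflectLast x)) +
        v (reflectLast x) * f (reflectLast x) * g (reflectLast x) := by
    intro x
    simp only [pd_comp_reflectLast, hv, Function.comp_apply]
    congr 1
    refine Finset.sum_congr rfl fun i _ => ?_
    split_ifs <;> ring
  rw [qform, qform]
  simp only [hpt]
  have hemb : MeasurableEmbedding (reflectLast (n := n)) :=
    (MeasurableEquiv.ofInvolutive _ reflectLast_involutive
      measurePreserving_reflectLast.measurable).measurableEmbedding
  have h := measurePreserving_reflectLast.setIntegral_preimage_emb hemb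
    (fun y => (∑ i, pd i f y * pd i g y) + v y * f y * g y) s
  rwa [hs] at h

theorem comp_reflectLast_eq_of_unique_ground_state {n : ℕ} {v Ψ : (Fin (n + 1) → ℝ) → ℝ}
    (hsym : ∀ x, v (reflectLast x) = v x) (hΨ : ContDiff ℝ 1 Ψ)
    (hpos : ∀ x ∈ Set.Icc (0 : Fin (n + 1) → ℝ) 1, 0 < Ψ x)
    (hgs : qform (Set.Icc (0 : Fin (n + 1) → ℝ) 1) v Ψ Ψ = 0)
    (huniq : ∀ φ : (Fin (n + 1) → ℝ) → ℝ, ContDiff ℝ 1 φ →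
      (∀ x ∈ Set.Icc (0 : Fin (n + 1) → ℝ) 1, 0 < φ x) →
      qform (Set.Icc (0 : Fin (n + 1) → ℝ) 1) v φ φ = 0 →
      ∃ μ > 0, ∀ x ∈ Set.Icc (0 : Fin (n + 1) → ℝ) 1, φ x = μ * Ψ x) :
    ∀ x ∈ Set.Icc (0 : Fin (n + 1) → ℝ) 1, Ψ (reflectLast x) = Ψ x := by
  obtain ⟨c, -, hc⟩ := huniq (Ψ ∘ reflectLast) (hΨ.comp contDiff_reflectLast)
    (fun x hx => hpos _ (reflectLast_mem_Icc hx))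
    (by rwa [qform_comp_reflectLast reflectLast_preimage_Icc hsym])
  have hmid : (fun _ : Fin (n + 1) => (1 / 2 : ℝ)) ∈ Set.Icc (0 : Fin (n + 1) → ℝ) 1 :=
    ⟨fun _ => by norm_num, fun _ => by norm_num⟩
  have hc1 : c = 1 := by
    have h := hc _ hmid
    rw [Function.comp_apply, reflectLast_half] at h
    have := hpos _ hmid
    nlinarith
  intro x hx
  simpa [hc1] using hc x hx

theorem ground_states_match_on_face_general {n : ℕ}
    (v₁ v₂ Ψ₁ Ψ₂ Φ : (Fin (n + 1) → ℝ) → ℝ)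
    (hsym₁ : ∀ x, v₁ (reflectLast x) = v₁ x)
    (hΨ₁ : ContDiff ℝ 1 Ψ₁)
    (hΨ₁pos : ∀ x ∈ Set.Icc (0 : Fin (n + 1) → ℝ) 1, 0 < Ψ₁ x)
    (hgs₁ : qform (Set.Icc (0 : Fin (n + 1) → ℝ) 1) v₁ Ψ₁ Ψ₁ = 0)
    (huniq₁ : ∀ φ : (Fin (n + 1) → ℝ) → ℝ, ContDiff ℝ 1 φ →
      (∀ x ∈ Set.Icc (0 : Fin (n + 1) → ℝ) 1, 0 < φ x) →
      qform (Set.Icc (0 : Fin (n + 1) → ℝ) 1) v₁ φ φ = 0 →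
      ∃ μ > 0, ∀ x ∈ Set.Icc (0 : Fin (n + 1) → ℝ) 1, φ x = μ * Ψ₁ x)
    (huniq₂ : ∀ φ : (Fin (n + 1) → ℝ) → ℝ, ContDiff ℝ 1 φ →
      (∀ x ∈ Set.Icc (0 : Fin (n + 1) → ℝ) 1, 0 < φ x) →
      qform (Set.Icc (0 : Fin (n + 1) → ℝ) 1) v₂ φ φ = 0 →
      ∃ μ > 0, ∀ x ∈ Set.Icc (0 : Fin (n + 1) → ℝ) 1, φ x = μ * Ψ₂ x)
    (hΦ : ContDiff ℝ 1 Φ)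
    (hΦpos : ∀ x ∈ Set.Icc (0 : Fin (n + 1) → ℝ) 1 ∪
        {y | y - Pi.single (Fin.last n) (1 : ℝ) ∈ Set.Icc (0 : Fin (n + 1) → ℝ) 1}, 0 < Φ x)
    (hΦ₁ : qform (Set.Icc (0 : Fin (n + 1) → ℝ) 1) v₁ Φ Φ = 0)
    (hΦ₂ : qform (Set.Icc (0 : Fin (n + 1) → ℝ) 1) v₂
      (fun x => Φ (x + Pi.single (Fin.last n) (1 : ℝ)))
      (fun x => Φ (x + Pi.single (Fin.last n) (1 : ℝ))) = 0) :
    ∃ μ₁ > (0 : ℝ), ∃ μ₂ > (0 : ℝ),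
      ∀ x ∈ Set.Icc (0 : Fin (n + 1) → ℝ) 1, x (Fin.last n) = 0 →
        μ₁ * Ψ₁ x = μ₂ * Ψ₂ x := by
  set e : Fin (n + 1) → ℝ := Pi.single (Fin.last n) 1
  obtain ⟨μ₁, hμ₁, hΦΨ₁⟩ := huniq₁ Φ hΦ (fun x hx => hΦpos x (Or.inl hx)) hΦ₁
  obtain ⟨μ₂, hμ₂, hΦΨ₂⟩ :=
    huniq₂ (fun x => Φ (x + e)) (hΦ.comp (contDiff_id.add contDiff_const))
    (fun x hx => hΦpos _ (Or.inr (by simpa using hx))) hΦ₂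
  have hΨ₁sym := comp_reflectLast_eq_of_unique_ground_state hsym₁ hΨ₁ hΨ₁pos hgs₁ huniq₁
  refine ⟨μ₁, hμ₁, μ₂, hμ₂, fun x hx hx0 => ?_⟩
  have hRx : reflectLast x = x + e := reflectLast_eq_add_single_of_last_eq_zero hx0
  calc μ₁ * Ψ₁ x = μ₁ * Ψ₁ (x + e) := by rw [← hRx, hΨ₁sym x hx]
    _ = Φ (x + e) := (hΦΨ₁ _ (hRx ▸ reflectLast_mem_Icc hx)).symm
    _ = μ₂ * Ψ₂ x := hΦΨ₂ x hx

/-- Matching of ground states on the common face: if the zero-energy ground states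
`Ψ₁, Ψ₂` on the unit cube are unique up to scalars, the potentials `v₁, v₂` are symmetric
about `{x_d = 1/2}`, and the double-cube Neumann operator `H₁₂` on
`U = C₁(0) ∪ C₁(e_d)` has ground state energy `0` (witnessed by a positive continuous
ground state `Φ` whose restrictions to the two unit cubes are zero-energy minimizers),
then there exist `μ₁, μ₂ > 0` with `μ₁Ψ₁(x',0) = μ₂Ψ₂(x',0)` on the face `{x_d = 0}`. -/
theorem ground_states_match_on_face {n : ℕ}
    (v₁ v₂ Ψ₁ Ψ₂ Φ : (Fin (n + 1) → ℝ) → ℝ)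
    (hv₁ : Continuous v₁) (hv₂ : Continuous v₂)
    (hsym₁ : ∀ x, v₁ (reflectLast x) = v₁ x)
    (hsym₂ : ∀ x, v₂ (reflectLast x) = v₂ x)
    (hΨ₁ : ContDiff ℝ 1 Ψ₁) (hΨ₂ : ContDiff ℝ 1 Ψ₂)
    (hΨ₁pos : ∀ x ∈ Set.Icc (0 : Fin (n + 1) → ℝ) 1, 0 < Ψ₁ x)
    (hΨ₂pos : ∀ x ∈ Set.Icc (0 : Fin (n + 1) → ℝ) 1, 0 < Ψ₂ x)
    (hgs₁ : qform (Set.Icc (0 : Fin (n + 1) → ℝ) 1) v₁ Ψ₁ Ψ₁ = 0)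
    (hgs₂ : qform (Set.Icc (0 : Fin (n + 1) → ℝ) 1) v₂ Ψ₂ Ψ₂ = 0)
    (huniq₁ : ∀ φ : (Fin (n + 1) → ℝ) → ℝ, ContDiff ℝ 1 φ →
      (∀ x ∈ Set.Icc (0 : Fin (n + 1) → ℝ) 1, 0 < φ x) →
      qform (Set.Icc (0 : Fin (n + 1) → ℝ) 1) v₁ φ φ = 0 →
      ∃ μ > 0, ∀ x ∈ Set.Icc (0 : Fin (n + 1) → ℝ) 1, φ x = μ * Ψ₁ x)
    (huniq₂ : ∀ φ : (Fin (n + 1) → ℝ) → ℝ, ContDiff ℝ 1 φ →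
      (∀ x ∈ Set.Icc (0 : Fin (n + 1) → ℝ) 1, 0 < φ x) →
      qform (Set.Icc (0 : Fin (n + 1) → ℝ) 1) v₂ φ φ = 0 →
      ∃ μ > 0, ∀ x ∈ Set.Icc (0 : Fin (n + 1) → ℝ) 1, φ x = μ * Ψ₂ x)
    (hΦ : ContDiff ℝ 1 Φ)
    (hΦpos : ∀ x ∈ Set.Icc (0 : Fin (n + 1) → ℝ) 1 ∪
        {y | y - Pi.single (Fin.last n) (1 : ℝ) ∈ Set.Icc (0 : Fin (n + 1) → ℝ) 1}, 0 < Φ x)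
    (hΦ₁ : qform (Set.Icc (0 : Fin (n + 1) → ℝ) 1) v₁ Φ Φ = 0)
    (hΦ₂ : qform (Set.Icc (0 : Fin (n + 1) → ℝ) 1) v₂
      (fun x => Φ (x + Pi.single (Fin.last n) (1 : ℝ)))
      (fun x => Φ (x + Pi.single (Fin.last n) (1 : ℝ))) = 0) :
    ∃ μ₁ > (0 : ℝ), ∃ μ₂ > (0 : ℝ),
      ∀ x ∈ Set.Icc (0 : Fin (n + 1) → ℝ) 1, x (Fin.last n) = 0 →
        μ₁ * Ψ₁ x = μ₂ * Ψ₂ x :=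
  ground_states_match_on_face_general v₁ v₂ Ψ₁ Ψ₂ Φ hsym₁ hΨ₁ hΨ₁pos hgs₁ huniq₁ huniq₂ hΦ hΦpos hΦ₁
    hΦ₂
end

section
/- Positivity of the Dirichlet-to-Neumann operator: in the setting above, with α = inf σ(P₀^N) > 0 the Neumann ground state energy of −Δ + W₀ on Ω₀, and λ₀ < α, there exists ε > 0 such that ⟨T(λ)f, f⟩_{L²(S)} ≥ ε ‖f‖²_{L²(S)} for all 0 ≤ λ ≤ λ₀ and all f ∈ H^{3/2}(S). -/
open MeasureTheory

noncomputable def lap {d : ℕ} (φ : (Fin d → ℝ) → ℝ) (x : Fin d → ℝ) : ℝ :=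
  ∑ i : Fin d, pd i (pd i φ) x

/-- The box `Ω₀ = [0,1]^{d-1} × [−a,0]`. -/
def Omega0 (n : ℕ) (a : ℝ) : Set (Fin (n + 1) → ℝ) :=
  {x | (∀ i : Fin n, x i.castSucc ∈ Set.Icc (0 : ℝ) 1) ∧ x (Fin.last n) ∈ Set.Icc (-a) 0}

/-!
Integrating `div (φ ∇φ) = |∇φ|² + (W₀ - λ) φ²` over `Ω₀`, the Neumann conditions kill every
boundary term except the one on `S`, so `⟨T(λ)f, f⟩ = Q₀(φ, φ) - λ‖φ‖²`. Coercivity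
`α‖φ‖² ≤ Q₀(φ, φ)` with `λ ≤ λ₀ < α` bounds this below by `(1 - λ₀/α) Q₀(φ, φ)`, and since `W₀`
is bounded below on the compact box, `Q₀` also controls `‖∇φ‖²`. The trace inequality
`‖f‖²_S ≤ (1 + 1/a)‖φ‖² + ‖∇φ‖²` comes from the divergence theorem applied to `w φ² e_d`, where
the weight `w` vanishes on the bottom face and equals `1` on `S`.
-/

open Set

lemma pd_continuous {d : ℕ} (i : Fin d) {φ : (Fin d → ℝ) → ℝ} (h : ContDiff ℝ 1 φ) :
    Continuous (pd i φ) :=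
  (h.continuous_fderiv one_ne_zero).clm_apply continuous_const

lemma pd_contDiff {d : ℕ} (i : Fin d) {φ : (Fin d → ℝ) → ℝ} (h : ContDiff ℝ 2 φ) :
    ContDiff ℝ 1 (pd i φ) :=
  (h.fderiv_right (by norm_num)).clm_apply contDiff_const

lemma pd_mul {d : ℕ} (i : Fin d) {u v : (Fin d → ℝ) → ℝ} {x : Fin d → ℝ}
    (hu : DifferentiableAt ℝ u x) (hv : DifferentiableAt ℝ v x) :
    pd i (fun y => u y * v y) x = pd i u x * v x + u x * pd i v x := by
  simp only [pd, fderiv_fun_mul hu hv, add_apply, smul_apply, smul_eq_mul]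
  ring

lemma continuous_gradSqd {d : ℕ} {φ : (Fin d → ℝ) → ℝ} (hφ : ContDiff ℝ 1 φ) :
    Continuous (gradSqd φ) :=
  continuous_finsetSum _ fun i _ => (pd_continuous i hφ).pow 2

lemma sq_pd_le_gradSqd {d : ℕ} (i : Fin d) (φ : (Fin d → ℝ) → ℝ) (x : Fin d → ℝ) :
    pd i φ x ^ 2 ≤ gradSqd φ x :=
  Finset.single_le_sum (f := fun j => pd j φ x ^ 2) (fun _ _ => sq_nonneg _) (Finset.mem_univ i)

theorem integral_sum_pd_eq_top_flux {n : ℕ} {lo hi : Fin (n + 1) → ℝ} (hle : lo ≤ hi)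
    {F : Fin (n + 1) → (Fin (n + 1) → ℝ) → ℝ} (hF : ∀ i, ContDiff ℝ 1 (F i))
    (hside : ∀ i : Fin n, ∀ x ∈ Icc lo hi,
      (x i.castSucc = lo i.castSucc ∨ x i.castSucc = hi i.castSucc) → F i.castSucc x = 0)
    (hbot : ∀ x ∈ Icc lo hi, x (Fin.last n) = lo (Fin.last n) → F (Fin.last n) x = 0) :
    ∫ x in Icc lo hi, ∑ i, pd i (F i) x =
      ∫ y in Icc (Fin.init lo) (Fin.init hi), F (Fin.last n) (Fin.snoc y (hi (Fin.last n))) := by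
  have face_zero : ∀ i c, c ∈ Icc (lo i) (hi i) →
      (∀ x ∈ Icc lo hi, x i = c → F i x = 0) →
      ∫ y in Icc (lo ∘ i.succAbove) (hi ∘ i.succAbove), F i (i.insertNth c y) = 0 :=
    fun i c hc hF0 => setIntegral_eq_zero_of_forall_eq_zero fun y hy =>
      hF0 _ (Fin.insertNth_mem_Icc.2 ⟨hc, hy⟩) (Fin.insertNth_apply_same _ _ _)
  refine (integral_divergence_of_hasFDerivAt_off_countable' lo hi hle F
    (fun i x => fderiv ℝ (F i) x) ∅ countable_empty (fun i => (hF i).continuous.continuousOn)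
    (fun x _ i => ((hF i).differentiable one_ne_zero x).hasFDerivAt)
    ((continuous_finsetSum _ fun i _ => pd_continuous i (hF i)).integrableOn_Icc)).trans ?_
  rw [Fin.sum_univ_castSucc, Finset.sum_eq_zero, zero_add,
    face_zero _ _ ⟨le_rfl, hle _⟩ (fun x hx h => hbot x hx h), sub_zero]
  · simp only [Fin.succAbove_last, Fin.insertNth_last']
    rfl
  · intro j _
    rw [face_zero _ _ ⟨hle _, le_rfl⟩ (fun x hx h => hside j x hx (Or.inr h)),
      face_zero _ _ ⟨le_rfl, hle _⟩ (fun x hx h => hside j x hx (Or.inl h)), sub_zero]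

lemma Omega0_eq_Icc (n : ℕ) (a : ℝ) :
    Omega0 n a = Icc (Fin.snoc 0 (-a)) (Fin.snoc 1 0) := by
  ext x
  simp only [Omega0, mem_ofPred_eq, mem_Icc, Pi.le_def, Fin.forall_fin_succ', Fin.snoc_castSucc,
    Fin.snoc_last, Pi.zero_apply, Pi.one_apply, forall_and]
  tauto

lemma measurableSet_Omega0 (n : ℕ) (a : ℝ) : MeasurableSet (Omega0 n a) :=
  Omega0_eq_Icc n a ▸ measurableSet_Icc

lemma isCompact_Omega0 (n : ℕ) (a : ℝ) : IsCompact (Omega0 n a) :=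
  Omega0_eq_Icc n a ▸ isCompact_Icc

lemma Continuous.integrableOn_Omega0 {n : ℕ} {a : ℝ} {g : (Fin (n + 1) → ℝ) → ℝ}
    (hg : Continuous g) : IntegrableOn g (Omega0 n a) :=
  hg.continuousOn.integrableOn_compact (isCompact_Omega0 n a)

theorem integral_sum_pd_eq_top_flux_Omega0 {n : ℕ} {a : ℝ} (ha : 0 < a)
    {F : Fin (n + 1) → (Fin (n + 1) → ℝ) → ℝ} (hF : ∀ i, ContDiff ℝ 1 (F i))
    (hside : ∀ i : Fin n, ∀ x ∈ Omega0 n a,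
      (x i.castSucc = 0 ∨ x i.castSucc = 1) → F i.castSucc x = 0)
    (hbot : ∀ x ∈ Omega0 n a, x (Fin.last n) = -a → F (Fin.last n) x = 0) :
    ∫ x in Omega0 n a, ∑ i, pd i (F i) x =
      ∫ y in Icc (0 : Fin n → ℝ) 1, F (Fin.last n) (Fin.snoc y 0) := by
  rw [Omega0_eq_Icc] at hside hbot ⊢
  have hle : (Fin.snoc 0 (-a) : Fin (n + 1) → ℝ) ≤ Fin.snoc 1 0 := by
    simp only [Pi.le_def, Fin.forall_fin_succ', Fin.snoc_castSucc, Fin.snoc_last]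
    exact ⟨fun _ => zero_le_one, by linarith⟩
  simpa using integral_sum_pd_eq_top_flux hle hF
    (fun i x hx h => hside i x hx (by simpa using h)) (fun x hx h => hbot x hx (by simpa using h))

lemma integral_gradSqd_add_mul_sq_eq_flux {n : ℕ} {a : ℝ} (ha : 0 < a)
    {V φ : (Fin (n + 1) → ℝ) → ℝ} (hφ : ContDiff ℝ 2 φ)
    (hpde : ∀ x ∈ Omega0 n a, -lap φ x + V x * φ x = 0)
    (hneu : ∀ i : Fin n, ∀ x ∈ Omega0 n a,
      (x i.castSucc = 0 ∨ x i.castSucc = 1) → pd i.castSucc φ x = 0)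
    (hbot : ∀ x ∈ Omega0 n a, x (Fin.last n) = -a → pd (Fin.last n) φ x = 0) :
    ∫ x in Omega0 n a, (gradSqd φ x + V x * φ x ^ 2) =
      ∫ y in Icc (0 : Fin n → ℝ) 1, φ (Fin.snoc y 0) * pd (Fin.last n) φ (Fin.snoc y 0) := by
  have hφ1 : Differentiable ℝ φ := hφ.differentiable two_ne_zero
  have hpd1 : ∀ i, ContDiff ℝ 1 (pd i φ) := fun i => pd_contDiff i hφ
  have hdiv : ∀ x ∈ Omega0 n a,
      ∑ i, pd i (fun y => φ y * pd i φ y) x = gradSqd φ x + V x * φ x ^ 2 := by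
    intro x hx
    simp only [fun i => pd_mul i (hφ1 x) ((hpd1 i).differentiable one_ne_zero x)]
    rw [Finset.sum_add_distrib, ← Finset.mul_sum, show ∑ i, pd i (pd i φ) x = lap φ x from rfl,
      show lap φ x = V x * φ x by linarith [hpde x hx]]
    simp only [gradSqd, sq]
    ring
  rw [← setIntegral_congr_fun (measurableSet_Omega0 n a) hdiv]
  exact integral_sum_pd_eq_top_flux_Omega0 ha (fun i => (hφ.of_le one_le_two).mul (hpd1 i))
    (fun i x hx h => by rw [hneu i x hx h, mul_zero]) (fun x hx h => by rw [hbot x hx h, mul_zero])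

lemma integral_pd_last_eq_top_Omega0 {n : ℕ} {a : ℝ} (ha : 0 < a)
    {g : (Fin (n + 1) → ℝ) → ℝ} (hg : ContDiff ℝ 1 g)
    (hbot : ∀ x ∈ Omega0 n a, x (Fin.last n) = -a → g x = 0) :
    ∫ x in Omega0 n a, pd (Fin.last n) g x = ∫ y in Icc (0 : Fin n → ℝ) 1, g (Fin.snoc y 0) := by
  set F : Fin (n + 1) → (Fin (n + 1) → ℝ) → ℝ := Pi.single (Fin.last n) g with hF_def
  have hF : ∀ i, ContDiff ℝ 1 (F i) := by
    intro i
    rcases eq_or_ne i (Fin.last n) with rfl | hi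
    · rwa [hF_def, Pi.single_eq_same]
    · rw [hF_def, Pi.single_eq_of_ne hi]
      exact contDiff_const
  have hsum : ∀ x, ∑ i, pd i (F i) x = pd (Fin.last n) g x := fun x =>
    (Fintype.sum_eq_single (Fin.last n) fun i hi => by simp [F, Pi.single_eq_of_ne hi, pd]).trans
      (by rw [hF_def, Pi.single_eq_same])
  have hflux := integral_sum_pd_eq_top_flux_Omega0 ha hF
    (fun i x _ _ => by rw [hF_def, Pi.single_eq_of_ne (Fin.castSucc_lt_last i).ne, Pi.zero_apply])
    (fun x hx h => by rw [hF_def, Pi.single_eq_same]; exact hbot x hx h)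
  simp only [hsum] at hflux
  rwa [hF_def, Pi.single_eq_same] at hflux

lemma pd_last_affine {n : ℕ} (a c : ℝ) (x : Fin (n + 1) → ℝ) :
    pd (Fin.last n) (fun y => c * (y (Fin.last n) + a)) x = c := by
  have h : HasFDerivAt (fun y : Fin (n + 1) → ℝ => y (Fin.last n))
      (ContinuousLinearMap.proj (R := ℝ) (φ := fun _ => ℝ) (Fin.last n)) x :=
    hasFDerivAt_apply _ x
  simp [pd, ((h.add_const a).const_mul c).fderiv]

lemma integral_sq_top_le {n : ℕ} {a : ℝ} (ha : 0 < a) {φ : (Fin (n + 1) → ℝ) → ℝ}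
    (hφ : ContDiff ℝ 1 φ) :
    ∫ y in Icc (0 : Fin n → ℝ) 1, φ (Fin.snoc y 0) ^ 2 ≤
      (1 + a⁻¹) * (∫ x in Omega0 n a, φ x ^ 2) + ∫ x in Omega0 n a, gradSqd φ x := by
  set w : (Fin (n + 1) → ℝ) → ℝ := fun x => a⁻¹ * (x (Fin.last n) + a) with hw_def
  have hw : ContDiff ℝ 1 w := by fun_prop
  have hφd := hφ.differentiable one_ne_zero
  have hpoint : ∀ x ∈ Omega0 n a, pd (Fin.last n) (fun y => w y * (φ y * φ y)) x ≤
      (1 + a⁻¹) * φ x ^ 2 + gradSqd φ x := by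
    intro x hx
    have hw0 : 0 ≤ w x := mul_nonneg (inv_nonneg.2 ha.le) (by linarith [hx.2.1])
    have hw1 : w x ≤ 1 := by rw [hw_def, inv_mul_le_iff₀ ha]; linarith [hx.2.2]
    rw [pd_mul (v := fun y => φ y * φ y) _ (hw.differentiable one_ne_zero x)
      ((hφd x).mul (hφd x)), pd_mul _ (hφd x) (hφd x), pd_last_affine]
    nlinarith [sq_pd_le_gradSqd (Fin.last n) φ x,
      mul_nonneg hw0 (sq_nonneg (φ x - pd (Fin.last n) φ x)),
      mul_nonneg (sub_nonneg.2 hw1)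
        (add_nonneg (sq_nonneg (φ x)) (sq_nonneg (pd (Fin.last n) φ x)))]
  have hφ2 : Continuous fun x => φ x ^ 2 := hφ.continuous.pow 2
  have hgrad := continuous_gradSqd hφ
  calc ∫ y in Icc (0 : Fin n → ℝ) 1, φ (Fin.snoc y 0) ^ 2
      = ∫ x in Omega0 n a, pd (Fin.last n) (fun y => w y * (φ y * φ y)) x := by
        rw [integral_pd_last_eq_top_Omega0 ha (hw.mul (hφ.mul hφ)) fun x _ h => by simp [w, h]]
        simp [w, ha.ne', sq]
    _ ≤ ∫ x in Omega0 n a, ((1 + a⁻¹) * φ x ^ 2 + gradSqd φ x) :=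
        setIntegral_mono_on (pd_continuous _ (hw.mul (hφ.mul hφ))).integrableOn_Omega0
          ((hφ2.const_mul _).add hgrad).integrableOn_Omega0
          (measurableSet_Omega0 n a) hpoint
    _ = (1 + a⁻¹) * (∫ x in Omega0 n a, φ x ^ 2) + ∫ x in Omega0 n a, gradSqd φ x := by
        rw [integral_add (hφ2.const_mul _).integrableOn_Omega0 hgrad.integrableOn_Omega0,
          integral_const_mul]

lemma integral_gradSqd_le {n : ℕ} {a M : ℝ} {W φ : (Fin (n + 1) → ℝ) → ℝ}
    (hW : Continuous W) (hφ : ContDiff ℝ 1 φ) (hWM : ∀ x ∈ Omega0 n a, -M ≤ W x) :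
    ∫ x in Omega0 n a, gradSqd φ x ≤
      (∫ x in Omega0 n a, (gradSqd φ x + W x * φ x ^ 2)) + M * ∫ x in Omega0 n a, φ x ^ 2 := by
  have hφ2 : Continuous fun x => φ x ^ 2 := hφ.continuous.pow 2
  have hQ : Continuous fun x => gradSqd φ x + W x * φ x ^ 2 :=
    (continuous_gradSqd hφ).add (hW.mul hφ2)
  rw [← integral_const_mul, ← integral_add hQ.integrableOn_Omega0
    (hφ2.const_mul M).integrableOn_Omega0]
  refine setIntegral_mono_on (continuous_gradSqd hφ).integrableOn_Omega0
    (hQ.add (hφ2.const_mul M)).integrableOn_Omega0 (measurableSet_Omega0 n a) fun x hx => ?_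
  nlinarith [mul_nonneg (neg_le_iff_add_nonneg.1 (hWM x hx)) (sq_nonneg (φ x))]

lemma div_mul_le_sub_mul_of_coercive {α M C lam lam₀ P G Q T : ℝ} (hα : 0 < α) (hM : 0 ≤ M)
    (hC : 0 ≤ C) (hlam : 0 ≤ lam) (hlam₀ : lam ≤ lam₀) (hlam₀α : lam₀ ≤ α) (hP : 0 ≤ P)
    (hcoer : α * P ≤ Q) (hG : G ≤ Q + M * P) (hT : T ≤ C * P + G) :
    (α - lam₀) / (C + α + M) * T ≤ Q - lam * P := by
  have hK : 0 < C + α + M := by linarith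
  have hαT : α * T ≤ (C + α + M) * Q := by
    nlinarith [mul_le_mul_of_nonneg_left hcoer hC, mul_le_mul_of_nonneg_left hcoer hM]
  calc (α - lam₀) / (C + α + M) * T = (α - lam₀) / (α * (C + α + M)) * (α * T) := by
        field_simp
    _ ≤ (α - lam₀) / (α * (C + α + M)) * ((C + α + M) * Q) :=
        mul_le_mul_of_nonneg_left hαT (div_nonneg (sub_nonneg.2 hlam₀α) (by positivity))
    _ = Q - lam₀ / α * Q := by field_simp
    _ ≤ Q - lam * P := by
        have : lam * P ≤ lam₀ / α * Q := by
          rw [div_mul_eq_mul_div, le_div_iff₀ hα]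
          nlinarith [mul_le_mul_of_nonneg_left hcoer (hlam.trans hlam₀),
            mul_le_mul_of_nonneg_right hlam₀ hP]
        linarith

/-- Positivity of the Dirichlet-to-Neumann operator: if `α = inf σ(P₀^N) > 0` (expressed
by coercivity of the Neumann form of `−Δ + W₀` on `Ω₀`) and `λ₀ < α`, then there is
`ε > 0` such that `⟨T(λ)f, f⟩_{L²(S)} ≥ ε‖f‖²_{L²(S)}` for all `0 ≤ λ ≤ λ₀` and all `f`,
where `T(λ)f = ∂_ν φ|_S` for the solution `φ` of the mixed boundary value problem. -/
theorem dtn_positive {n : ℕ} (a α lam₀ : ℝ) (ha : 0 < a) (hα : 0 < α) (hlam₀ : lam₀ < α)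
    (W₀ : (Fin (n + 1) → ℝ) → ℝ) (hW₀ : Continuous W₀)
    (hcoerc : ∀ u : (Fin (n + 1) → ℝ) → ℝ, ContDiff ℝ 1 u →
      α * ∫ x in Omega0 n a, (u x) ^ 2 ≤
        ∫ x in Omega0 n a, (gradSqd u x + W₀ x * (u x) ^ 2)) :
    ∃ ε > (0 : ℝ), ∀ lam : ℝ, lam ∈ Set.Icc 0 lam₀ →
      ∀ (f : (Fin n → ℝ) → ℝ) (φ : (Fin (n + 1) → ℝ) → ℝ), ContDiff ℝ 2 φ →
      (∀ x ∈ Omega0 n a, -lap φ x + (W₀ x - lam) * φ x = 0) →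
      (∀ x' ∈ Set.Icc (0 : Fin n → ℝ) 1, φ (Fin.snoc x' 0) = f x') →
      (∀ i : Fin n, ∀ x ∈ Omega0 n a,
        (x i.castSucc = 0 ∨ x i.castSucc = 1) → pd i.castSucc φ x = 0) →
      (∀ x ∈ Omega0 n a, x (Fin.last n) = -a → pd (Fin.last n) φ x = 0) →
      ε * ∫ x' in Set.Icc (0 : Fin n → ℝ) 1, (f x') ^ 2 ≤
        ∫ x' in Set.Icc (0 : Fin n → ℝ) 1, pd (Fin.last n) φ (Fin.snoc x' 0) * f x' := by
  obtain ⟨m, hm⟩ := (isCompact_Omega0 n a).bddBelow_image hW₀.continuousOn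
  have hWM : ∀ x ∈ Omega0 n a, -max (-m) 0 ≤ W₀ x :=
    fun x hx => (neg_le.2 (le_max_left _ _)).trans (hm ⟨x, hx, rfl⟩)
  refine ⟨(α - lam₀) / (1 + a⁻¹ + α + max (-m) 0), div_pos (sub_pos.2 hlam₀) (by positivity), ?_⟩
  rintro lam ⟨hlam, hlam_le⟩ f φ hφ hpde hbc hneu hbot
  have hφ1 : ContDiff ℝ 1 φ := hφ.of_le one_le_two
  have hφ2 : Continuous fun x => φ x ^ 2 := hφ.continuous.pow 2
  have hQ : Continuous fun x => gradSqd φ x + W₀ x * φ x ^ 2 :=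
    (continuous_gradSqd hφ1).add (hW₀.mul hφ2)
  have htrace : ∫ y in Icc (0 : Fin n → ℝ) 1, f y ^ 2 =
      ∫ y in Icc (0 : Fin n → ℝ) 1, φ (Fin.snoc y 0) ^ 2 :=
    setIntegral_congr_fun measurableSet_Icc fun y hy => by rw [hbc y hy]
  have hflux : ∫ y in Icc (0 : Fin n → ℝ) 1, pd (Fin.last n) φ (Fin.snoc y 0) * f y =
      (∫ x in Omega0 n a, (gradSqd φ x + W₀ x * φ x ^ 2)) - lam * ∫ x in Omega0 n a, φ x ^ 2 := by
    rw [setIntegral_congr_fun measurableSet_Icc fun y hy => by rw [← hbc y hy, mul_comm],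
      ← integral_gradSqd_add_mul_sq_eq_flux ha hφ hpde hneu hbot, ← integral_const_mul,
      ← integral_sub hQ.integrableOn_Omega0 (hφ2.const_mul lam).integrableOn_Omega0]
    congr 1 with x
    ring
  rw [htrace, hflux]
  exact div_mul_le_sub_mul_of_coercive hα (le_max_right _ _) (by positivity) hlam hlam_le
    hlam₀.le (integral_nonneg fun x => sq_nonneg _) (hcoerc φ hφ1)
    (integral_gradSqd_le hW₀ hφ1 hWM) (integral_sq_top_le ha hφ1)
end
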